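/- Let n ≥ 1, let 1 ≤ k ≤ n, and let μ be the uniform (rotation-invariant) probability measure on the unit sphere in EuclideanSpace ℝ (Fin (2n)). For x on the sphere define the planar edges e_i(x) = ( 2(x_{2i}² − x_{2i+1}²), 4·x_{2i}·x_{2i+1} ) ∈ ℝ². Then the expected squared length of the chord skipping the first k edges of a random planar arm of length 2 satisfies ∫ ‖∑_{i=0}^{k-1} e_i(x)‖² dμ(x) = 8k/(n(n+1)), that is, E(Chord(k), Arm₂(n)) = 8k/(n(n+1)). -/

import Mathlib

/-!
Write `zᵢ = x_{2i} + 𝐢·x_{2i+1}`, so that the `i`-th edge is `2 zᵢ²`. The quarter turn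
`zᵢ ↦ 𝐢 zᵢ` of the `i`-th coordinate plane is an isometry that negates the `i`-th edge and fixes
the others, so by invariance of `μ` distinct edges are orthogonal in `L²(μ)` and the expected
chord is `∑_{i<k} 𝔼 ‖eᵢ‖² = 4 ∑_{i<k} 𝔼 (x_{2i}² + x_{2i+1}²)²`.

The fourth moments on the sphere `S^{m-1}` also come from invariance alone: the reflections
exchanging `√2·e_a` with `e_a ± e_b` give `𝔼 (x_a ± x_b)⁴ = 4 𝔼 x_a⁴`, hence
`𝔼 x_a⁴ = 3 𝔼 x_a² x_b²`, and integrating `(∑ x_a²)² = 1` gives `𝔼 x_a⁴ = 3 / (m (m + 2))`.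
-/

open MeasureTheory Real

/-- The `i`-th planar edge of the arm determined by `√2·x` for `x ∈ ℝ^{2n}`:
`eᵢ(x) = (2(x_{2i}² − x_{2i+1}²), 4·x_{2i}·x_{2i+1}) ∈ ℝ²`. -/
noncomputable def planarEdge (n : ℕ) (i : Fin n) (x : EuclideanSpace ℝ (Fin (2 * n))) :
    EuclideanSpace ℝ (Fin 2) :=
  (WithLp.equiv 2 (Fin 2 → ℝ)).symm
    ![2 * ((x ⟨2 * i, by have := i.isLt; omega⟩) ^ 2
        - (x ⟨2 * i + 1, by have := i.isLt; omega⟩) ^ 2),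
      4 * (x ⟨2 * i, by have := i.isLt; omega⟩) * (x ⟨2 * i + 1, by have := i.isLt; omega⟩)]

open scoped RealInnerProductSpace

section Invariance

variable {E F : Type*} [NormedAddCommGroup E] [InnerProductSpace ℝ E] [MeasurableSpace E]
  [BorelSpace E] [NormedAddCommGroup F] [NormedSpace ℝ F] {μ : Measure E}

def IsOrthogonallyInvariant (μ : Measure E) : Prop :=
  ∀ O : E ≃ₗᵢ[ℝ] E, Measure.map (fun x => O x) μ = μ

theorem IsOrthogonallyInvariant.integral_comp (hμ : IsOrthogonallyInvariant μ)
    (O : E ≃ₗᵢ[ℝ] E) (f : E → F) : ∫ x, f (O x) ∂μ = ∫ x, f x ∂μ := by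
  conv_rhs => rw [← hμ O]
  exact (integral_map_equiv O.toHomeomorph.toMeasurableEquiv f).symm

theorem IsOrthogonallyInvariant.integral_eq_zero_of_comp_eq_neg (hμ : IsOrthogonallyInvariant μ)
    (O : E ≃ₗᵢ[ℝ] E) {f : E → ℝ} (hf : ∀ x, f (O x) = -f x) : ∫ x, f x ∂μ = 0 := by
  have h := hμ.integral_comp O f
  simp only [hf, integral_neg] at h
  linarith

theorem IsOrthogonallyInvariant.integral_comp_inner_eq (hμ : IsOrthogonallyInvariant μ)
    {v w : E} (h : ‖v‖ = ‖w‖) (g : ℝ → ℝ) : ∫ x, g ⟪x, v⟫ ∂μ = ∫ x, g ⟪x, w⟫ ∂μ := by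
  set R := Submodule.reflection (ℝ ∙ (v - w))ᗮ
  have hR : ∀ x, ⟪R x, w⟫ = ⟪x, v⟫ := fun x => by
    rw [← Submodule.reflection_sub h, LinearIsometryEquiv.inner_map_map]
  simp only [← hR]
  exact hμ.integral_comp R (fun x => g ⟪x, w⟫)

end Invariance

theorem Continuous.integrable_of_ae_mem_isCompact {X F : Type*} [TopologicalSpace X]
    [T2Space X] [MeasurableSpace X] [OpensMeasurableSpace X] [NormedAddCommGroup F]
    {μ : Measure X} [IsFiniteMeasure μ] {K : Set X} (hK : IsCompact K)
    (hμK : ∀ᵐ x ∂μ, x ∈ K) {f : X → F} (hf : Continuous f) : Integrable f μ := by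
  rw [← Measure.restrict_eq_self_of_ae_mem hμK]
  exact hf.continuousOn.integrableOn_compact hK

theorem integral_norm_sum_sq_of_orthogonal {X F ι : Type*} [MeasurableSpace X]
    [NormedAddCommGroup F] [InnerProductSpace ℝ F] {μ : Measure X} (s : Finset ι)
    {f : ι → X → F} (hint : ∀ i j, Integrable (fun x => ⟪f i x, f j x⟫) μ)
    (horth : ∀ i j, i ≠ j → ∫ x, ⟪f i x, f j x⟫ ∂μ = 0) :
    ∫ x, ‖∑ i ∈ s, f i x‖ ^ 2 ∂μ = ∑ i ∈ s, ∫ x, ‖f i x‖ ^ 2 ∂μ := by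
  classical
  have hexpand : ∀ x, ‖∑ i ∈ s, f i x‖ ^ 2 = ∑ i ∈ s, ∑ j ∈ s, ⟪f i x, f j x⟫ := fun x => by
    rw [← real_inner_self_eq_norm_sq, sum_inner]
    simp only [inner_sum]
  simp_rw [hexpand]
  rw [integral_finsetSum _ fun i _ => integrable_finsetSum _ fun j _ => hint i j]
  refine Finset.sum_congr rfl fun i hi => ?_
  rw [integral_finsetSum _ fun j _ => hint i j,
    Finset.sum_eq_single_of_mem i hi fun j _ hji => horth i j hji.symm]
  simp only [real_inner_self_eq_norm_sq]

section Moments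

variable {ι : Type*} [Fintype ι] [DecidableEq ι] {μ : Measure (EuclideanSpace ℝ ι)}

theorem IsOrthogonallyInvariant.integral_coord_pow_four_eq (hμ : IsOrthogonallyInvariant μ)
    (a c : ι) : ∫ x, x a ^ 4 ∂μ = ∫ x, x c ^ 4 ∂μ := by
  simpa [EuclideanSpace.inner_single_right] using
    hμ.integral_comp_inner_eq (v := EuclideanSpace.single a 1)
      (w := EuclideanSpace.single c 1) (by simp) (· ^ 4)

theorem IsOrthogonallyInvariant.integral_coord_add_mul_pow_four (hμ : IsOrthogonallyInvariant μ)
    {a b : ι} (hab : a ≠ b) {t : ℝ} (ht : t ^ 2 = 1) :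
    ∫ x, (x a + t * x b) ^ 4 ∂μ = 4 * ∫ x, x a ^ 4 ∂μ := by
  have hnorm : ‖EuclideanSpace.single a (1 : ℝ) + EuclideanSpace.single b t‖
      = ‖EuclideanSpace.single a √2‖ := by
    rw [← sq_eq_sq₀ (norm_nonneg _) (norm_nonneg _), norm_add_sq_real]
    simp [EuclideanSpace.inner_single_left, hab, ht, one_add_one_eq_two]
  calc ∫ x, (x a + t * x b) ^ 4 ∂μ
      = ∫ x, ⟪x, EuclideanSpace.single a 1 + EuclideanSpace.single b t⟫ ^ 4 ∂μ := by
        simp [inner_add_right, EuclideanSpace.inner_single_right]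
    _ = ∫ x, ⟪x, EuclideanSpace.single a √2⟫ ^ 4 ∂μ := hμ.integral_comp_inner_eq hnorm (· ^ 4)
    _ = 4 * ∫ x, x a ^ 4 ∂μ := by
        rw [← integral_const_mul]
        congr 1 with x
        rw [EuclideanSpace.inner_single_right, conj_trivial, mul_pow,
          show √2 ^ 4 = (√2 ^ 2) ^ 2 by ring, sq_sqrt zero_le_two]
        norm_num

variable [IsProbabilityMeasure μ]

theorem IsOrthogonallyInvariant.integral_coord_pow_four_eq_three_mul
    (hS : ∀ᵐ x ∂μ, x ∈ Metric.sphere 0 1) (hμ : IsOrthogonallyInvariant μ) {a b : ι}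
    (hab : a ≠ b) : ∫ x, x a ^ 4 ∂μ = 3 * ∫ x, x a ^ 2 * x b ^ 2 ∂μ := by
  have hI : ∀ {f : EuclideanSpace ℝ ι → ℝ}, Continuous f → Integrable f μ :=
    fun hf => hf.integrable_of_ae_mem_isCompact (isCompact_sphere 0 1) hS
  have hsum : ∫ x, ((x a + 1 * x b) ^ 4 + (x a + -1 * x b) ^ 4) ∂μ
      = 2 * ∫ x, x a ^ 4 ∂μ + 12 * ∫ x, x a ^ 2 * x b ^ 2 ∂μ + 2 * ∫ x, x b ^ 4 ∂μ := by
    rw [← integral_const_mul, ← integral_const_mul, ← integral_const_mul,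
      ← integral_add (hI (by fun_prop)) (hI (by fun_prop)),
      ← integral_add (hI (by fun_prop)) (hI (by fun_prop))]
    congr 1 with x
    ring
  rw [integral_add (hI (by fun_prop)) (hI (by fun_prop)),
    hμ.integral_coord_add_mul_pow_four hab (one_pow 2),
    hμ.integral_coord_add_mul_pow_four hab (by norm_num),
    hμ.integral_coord_pow_four_eq b a] at hsum
  linarith

theorem IsOrthogonallyInvariant.integral_coord_pow_four
    (hS : ∀ᵐ x ∂μ, x ∈ Metric.sphere 0 1) (hμ : IsOrthogonallyInvariant μ) (a : ι) :
    ∫ x, x a ^ 4 ∂μ = 3 / (Fintype.card ι * (Fintype.card ι + 2)) := by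
  have hI : ∀ {f : EuclideanSpace ℝ ι → ℝ}, Continuous f → Integrable f μ :=
    fun hf => hf.integrable_of_ae_mem_isCompact (isCompact_sphere 0 1) hS
  set Q := ∫ x, x a ^ 4 ∂μ
  have hmoment : ∀ b c : ι, ∫ x, x b ^ 2 * x c ^ 2 ∂μ = Q / 3 + if b = c then 2 * Q / 3 else 0 := by
    intro b c
    rcases eq_or_ne b c with rfl | hbc
    · simp only [← pow_add, if_true, hμ.integral_coord_pow_four_eq b a, Q]
      ring
    · have := hμ.integral_coord_pow_four_eq_three_mul hS hbc
      rw [hμ.integral_coord_pow_four_eq b a] at this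
      simp only [hbc, if_false]
      linarith
  have htotal : ∫ x, (∑ b, x b ^ 2) * (∑ c, x c ^ 2) ∂μ = 1 := by
    rw [integral_congr_ae (g := fun _ => 1), integral_const, probReal_univ, one_smul]
    filter_upwards [hS] with x hx
    rw [← EuclideanSpace.real_norm_sq_eq, mem_sphere_zero_iff_norm.1 hx]
    norm_num
  have hrow : ∀ b, ∫ x, ∑ c, x b ^ 2 * x c ^ 2 ∂μ = ∑ c, ∫ x, x b ^ 2 * x c ^ 2 ∂μ :=
    fun b => integral_finsetSum _ fun c _ => hI (by fun_prop)
  simp_rw [Finset.sum_mul_sum] at htotal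
  rw [integral_finsetSum _ fun b _ => integrable_finsetSum _ fun c _ => hI (by fun_prop)] at htotal
  simp only [hrow, hmoment, Finset.sum_add_distrib, Finset.sum_ite_eq, Finset.mem_univ, if_true,
    Finset.sum_const, Finset.card_univ, nsmul_eq_mul] at htotal
  have hcard : (0 : ℝ) < Fintype.card ι := by exact_mod_cast Fintype.card_pos_iff.2 ⟨a⟩
  field_simp
  nlinarith

theorem IsOrthogonallyInvariant.integral_coord_sq_mul_sq
    (hS : ∀ᵐ x ∂μ, x ∈ Metric.sphere 0 1) (hμ : IsOrthogonallyInvariant μ) {a b : ι}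
    (hab : a ≠ b) :
    ∫ x, x a ^ 2 * x b ^ 2 ∂μ = 1 / (Fintype.card ι * (Fintype.card ι + 2)) := by
  have h := hμ.integral_coord_pow_four_eq_three_mul hS hab
  rw [hμ.integral_coord_pow_four hS a, div_eq_mul_one_div 3] at h
  linarith

end Moments

section QuarterTurn

variable {ι : Type*} [Fintype ι] [DecidableEq ι]

noncomputable def quarterTurn (a b : ι) : EuclideanSpace ℝ ι ≃ₗᵢ[ℝ] EuclideanSpace ℝ ι :=
  (LinearIsometryEquiv.piLpCongrLeft 2 ℝ ℝ (Equiv.swap a b)).trans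
    (LinearIsometryEquiv.piLpCongrRight 2 fun c =>
      if c = a then LinearIsometryEquiv.neg ℝ else LinearIsometryEquiv.refl ℝ ℝ)

theorem quarterTurn_apply_left (a b : ι) (x : EuclideanSpace ℝ ι) :
    quarterTurn a b x a = -x b := by
  simp [quarterTurn, Equiv.piCongrLeft']

theorem quarterTurn_apply_right {a b : ι} (hab : a ≠ b) (x : EuclideanSpace ℝ ι) :
    quarterTurn a b x b = x a := by
  simp [quarterTurn, Equiv.piCongrLeft', hab.symm]

theorem quarterTurn_apply_of_ne {a b c : ι} (hca : c ≠ a) (hcb : c ≠ b)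
    (x : EuclideanSpace ℝ ι) : quarterTurn a b x c = x c := by
  simp [quarterTurn, Equiv.piCongrLeft', hca, Equiv.swap_apply_of_ne_of_ne hca hcb]

end QuarterTurn

def evenIdx {n : ℕ} (i : Fin n) : Fin (2 * n) := ⟨2 * i, by omega⟩
def oddIdx {n : ℕ} (i : Fin n) : Fin (2 * n) := ⟨2 * i + 1, by omega⟩

section PlanarEdge
variable {n : ℕ}

theorem planarEdge_zero (i : Fin n) (x : EuclideanSpace ℝ (Fin (2 * n))) :
    planarEdge n i x 0 = 2 * (x (evenIdx i) ^ 2 - x (oddIdx i) ^ 2) := rfl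

theorem planarEdge_one (i : Fin n) (x : EuclideanSpace ℝ (Fin (2 * n))) :
    planarEdge n i x 1 = 4 * x (evenIdx i) * x (oddIdx i) := rfl

theorem continuous_planarEdge (i : Fin n) : Continuous (planarEdge n i) := by
  refine (PiLp.continuous_toLp 2 _).comp (continuous_pi fun r => ?_)
  fin_cases r <;> fun_prop

theorem norm_planarEdge_sq (i : Fin n) (x : EuclideanSpace ℝ (Fin (2 * n))) :
    ‖planarEdge n i x‖ ^ 2 = 4 * (x (evenIdx i) ^ 2 + x (oddIdx i) ^ 2) ^ 2 := by
  rw [EuclideanSpace.real_norm_sq_eq, Fin.sum_univ_two, planarEdge_zero, planarEdge_one]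
  ring

theorem planarEdge_quarterTurn_self (i : Fin n) (x : EuclideanSpace ℝ (Fin (2 * n))) :
    planarEdge n i (quarterTurn (evenIdx i) (oddIdx i) x) = -planarEdge n i x := by
  have hne : evenIdx i ≠ oddIdx i := by simp [evenIdx, oddIdx, Fin.ext_iff]
  ext r
  fin_cases r
  · simp only [Fin.zero_eta, PiLp.neg_apply, planarEdge_zero, quarterTurn_apply_left,
      quarterTurn_apply_right hne]
    ring
  · simp only [Fin.mk_one, PiLp.neg_apply, planarEdge_one, quarterTurn_apply_left,
      quarterTurn_apply_right hne]
    ring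

theorem planarEdge_quarterTurn_of_ne {i j : Fin n} (hij : i ≠ j)
    (x : EuclideanSpace ℝ (Fin (2 * n))) :
    planarEdge n j (quarterTurn (evenIdx i) (oddIdx i) x) = planarEdge n j x := by
  have hij' : (i : ℕ) ≠ j := Fin.val_ne_of_ne hij
  have h1 : evenIdx j ≠ evenIdx i := by simp [evenIdx, Fin.ext_iff]; omega
  have h2 : evenIdx j ≠ oddIdx i := by simp [evenIdx, oddIdx, Fin.ext_iff]; omega
  have h3 : oddIdx j ≠ evenIdx i := by simp [evenIdx, oddIdx, Fin.ext_iff]; omega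
  have h4 : oddIdx j ≠ oddIdx i := by simp [oddIdx, Fin.ext_iff]; omega
  ext r
  fin_cases r
  · simp only [Fin.zero_eta, planarEdge_zero, quarterTurn_apply_of_ne h1 h2,
      quarterTurn_apply_of_ne h3 h4]
  · simp only [Fin.mk_one, planarEdge_one, quarterTurn_apply_of_ne h1 h2,
      quarterTurn_apply_of_ne h3 h4]

end PlanarEdge

section Arm

variable {n : ℕ} {μ : Measure (EuclideanSpace ℝ (Fin (2 * n)))}

theorem IsOrthogonallyInvariant.integral_inner_planarEdge_of_ne (hμ : IsOrthogonallyInvariant μ)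
    {i j : Fin n} (hij : i ≠ j) : ∫ x, ⟪planarEdge n i x, planarEdge n j x⟫ ∂μ = 0 :=
  hμ.integral_eq_zero_of_comp_eq_neg (quarterTurn (evenIdx i) (oddIdx i)) fun x => by
    rw [planarEdge_quarterTurn_self, planarEdge_quarterTurn_of_ne hij, inner_neg_left]

theorem IsOrthogonallyInvariant.integral_norm_planarEdge_sq [IsProbabilityMeasure μ]
    (hS : ∀ᵐ x ∂μ, x ∈ Metric.sphere 0 1) (hμ : IsOrthogonallyInvariant μ) (i : Fin n) :
    ∫ x, ‖planarEdge n i x‖ ^ 2 ∂μ = 8 / (n * (n + 1)) := by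
  have hI : ∀ {f : EuclideanSpace ℝ (Fin (2 * n)) → ℝ}, Continuous f → Integrable f μ :=
    fun hf => hf.integrable_of_ae_mem_isCompact (isCompact_sphere 0 1) hS
  have hne : evenIdx i ≠ oddIdx i := by simp [evenIdx, oddIdx, Fin.ext_iff]
  have hmixed := hμ.integral_coord_sq_mul_sq hS hne
  have heven := hμ.integral_coord_pow_four hS (evenIdx i)
  have hodd := hμ.integral_coord_pow_four hS (oddIdx i)
  simp only [Fintype.card_fin, Nat.cast_mul, Nat.cast_ofNat] at hmixed heven hodd
  simp_rw [norm_planarEdge_sq]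
  calc ∫ x, 4 * (x (evenIdx i) ^ 2 + x (oddIdx i) ^ 2) ^ 2 ∂μ
      = 4 * ∫ x, x (evenIdx i) ^ 4 ∂μ + 8 * ∫ x, x (evenIdx i) ^ 2 * x (oddIdx i) ^ 2 ∂μ
          + 4 * ∫ x, x (oddIdx i) ^ 4 ∂μ := by
        rw [← integral_const_mul, ← integral_const_mul, ← integral_const_mul,
          ← integral_add (hI (by fun_prop)) (hI (by fun_prop)),
          ← integral_add (hI (by fun_prop)) (hI (by fun_prop))]
        congr 1 with x
        ring
    _ = 8 / (n * (n + 1)) := by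
        rw [heven, hmixed, hodd]
        field_simp
        ring

end Arm

theorem expected_chord_planar_arm_general (n k : ℕ) (hkn : k ≤ n)
    (μ : Measure (EuclideanSpace ℝ (Fin (2 * n)))) [IsProbabilityMeasure μ]
    (hsphere : μ (Metric.sphere (0 : EuclideanSpace ℝ (Fin (2 * n))) 1) = 1)
    (hinv : ∀ O : EuclideanSpace ℝ (Fin (2 * n)) ≃ₗᵢ[ℝ] EuclideanSpace ℝ (Fin (2 * n)),
      Measure.map (fun x => O x) μ = μ) :
    ∫ x, ‖∑ i : Fin k, planarEdge n (Fin.castLE hkn i) x‖ ^ 2 ∂μ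
      = 8 * (k : ℝ) / ((n : ℝ) * ((n : ℝ) + 1)) := by
  have hμ : IsOrthogonallyInvariant μ := hinv
  have hS : ∀ᵐ x ∂μ, x ∈ Metric.sphere 0 1 :=
    (ae_iff_measure_eq Metric.isClosed_sphere.measurableSet.nullMeasurableSet).2
      (by rw [measure_univ]; exact hsphere)
  have hI : ∀ i j : Fin k, Integrable (fun x =>
      ⟪planarEdge n (Fin.castLE hkn i) x, planarEdge n (Fin.castLE hkn j) x⟫) μ :=
    fun i j => ((continuous_planarEdge _).inner (continuous_planarEdge _))
      |>.integrable_of_ae_mem_isCompact (isCompact_sphere 0 1) hS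
  rw [integral_norm_sum_sq_of_orthogonal _ hI fun i j hij =>
    hμ.integral_inner_planarEdge_of_ne ((Fin.castLE_injective hkn).ne hij)]
  simp only [hμ.integral_norm_planarEdge_sq hS, Finset.sum_const, Finset.card_univ,
    Fintype.card_fin, nsmul_eq_mul]
  ring

/-- The expected squared length of the chord skipping the first `k` edges of a random planar
arm of total length 2: `E(Chord(k), Arm₂(n)) = 8k/(n(n+1))`.  Here `μ` is the uniform
(rotation-invariant) probability measure on the unit sphere in `ℝ^{2n}`. -/
theorem expected_chord_planar_arm (n k : ℕ) (hn : 1 ≤ n) (hk1 : 1 ≤ k) (hkn : k ≤ n)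
    (μ : Measure (EuclideanSpace ℝ (Fin (2 * n)))) [IsProbabilityMeasure μ]
    (hsphere : μ (Metric.sphere (0 : EuclideanSpace ℝ (Fin (2 * n))) 1) = 1)
    (hinv : ∀ O : EuclideanSpace ℝ (Fin (2 * n)) ≃ₗᵢ[ℝ] EuclideanSpace ℝ (Fin (2 * n)),
      Measure.map (fun x => O x) μ = μ) :
    ∫ x, ‖∑ i : Fin k, planarEdge n (Fin.castLE hkn i) x‖ ^ 2 ∂μ
      = 8 * (k : ℝ) / ((n : ℝ) * ((n : ℝ) + 1)) :=
  expected_chord_planar_arm_general n k hkn μ hsphere hinv
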